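/- Let ℱ ⊆ 𝒮 be a set cover of U, i.e., every element of U belongs to some member of ℱ. Then the graph obtained from the set-cover gadget graph G(U,𝒮) by contracting all edges g s_j with S_j ∈ ℱ — that is, the graph whose vertex set is obtained from V(G(U,𝒮)) by replacing the set {g} ∪ {s_j : S_j ∈ ℱ} with a single new vertex g*, where g* is adjacent to exactly those remaining vertices that are adjacent in G(U,𝒮) to some vertex of {g} ∪ {s_j : S_j ∈ ℱ}, and all other adjacencies are unchanged — is a chordal graph. -/

import Mathlib

/-- Vertices of the set-cover gadget graph: a vertex `s j` for every set `S_j`,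
vertices `a i`, `b i`, `c i` for every universe element `u_i`, and a special vertex `g`. -/
inductive SCVert (n m : ℕ) where
  | s : Fin m → SCVert n m
  | a : Fin n → SCVert n m
  | b : Fin n → SCVert n m
  | c : Fin n → SCVert n m
  | g : SCVert n m
deriving DecidableEq

/-- The base relation for the edges of the set-cover gadget graph for the family
`S : Fin m → Set (Fin n)`. -/
def scRel (n m : ℕ) (S : Fin m → Set (Fin n)) : SCVert n m → SCVert n m → Prop
  | .s _, .s _ => True
  | .g, .s _ => True
  | .g, .a _ => True
  | .g, .b _ => True
  | .a i, .c i' => i = i'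
  | .b i, .c i' => i = i'
  | .c i, .s j => i ∈ S j
  | _, _ => False

/-- The set-cover gadget graph `G(U, 𝒮)`. -/
def scGadget (n m : ℕ) (S : Fin m → Set (Fin n)) : SimpleGraph (SCVert n m) :=
  SimpleGraph.fromRel (scRel n m S)

/-- The graph obtained from the set-cover gadget graph by contracting all edges
`g s_j` with `j ∈ F`: the vertices `{g} ∪ {s_j : j ∈ F}` are replaced by the single
vertex `g` (playing the role of `g*`), which is adjacent to exactly those remaining
vertices adjacent in the gadget graph to some vertex of `{g} ∪ {s_j : j ∈ F}`;
all other adjacencies are unchanged. -/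
def scContracted (n m : ℕ) (S : Fin m → Set (Fin n)) (F : Set (Fin m)) :
    SimpleGraph {v : SCVert n m // ∀ j ∈ F, v ≠ SCVert.s j} :=
  SimpleGraph.fromRel (fun x y =>
    if x.val = SCVert.g then
      (scGadget n m S).Adj SCVert.g y.val ∨
        ∃ j ∈ F, (scGadget n m S).Adj (SCVert.s j) y.val
    else (scGadget n m S).Adj x.val y.val)

/-- `C` is (the vertex set of) an induced cycle on `ℓ` vertices of `G`. -/
def IsInducedCycle {α : Type*} (G : SimpleGraph α) (ℓ : ℕ) (C : Set α) : Prop :=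
  C.ncard = ℓ ∧ Nonempty (G.induce C ≃g SimpleGraph.cycleGraph ℓ)


/-!
In the contracted graph the new vertex `g*` is adjacent to every other vertex, because every
`c_i` has a neighbour `s_j` with `j ∈ F`; a universal vertex lies on no induced cycle of length
at least four. Away from `g*`, the vertices `a_i`, `b_i` have the single neighbour `c_i`, and the
neighbours of `c_i` other than `a_i`, `b_i` are `s`-vertices, which form a clique. But every vertex
of an induced cycle of length at least four has two distinct non-adjacent neighbours on the cycle,
so successively no `a_i`, `b_i`, `c_i` can lie on such a cycle, and a cycle made of `s`-vertices
only is a clique.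
-/

open SimpleGraph

theorem SimpleGraph.cycleGraph_adj_add_one {n : ℕ} (u : Fin (n + 2)) :
    (cycleGraph (n + 2)).Adj u (u + 1) := by
  simp [cycleGraph_adj]

theorem SimpleGraph.cycleGraph_not_adj_add_two {k : ℕ} (u : Fin (k + 4)) :
    ¬ (cycleGraph (k + 4)).Adj u (u + 2) := by
  rw [cycleGraph_adj, sub_add_cancel_left, add_sub_cancel_left, neg_eq_iff_add_eq_zero]
  simp [Fin.ext_iff, Fin.val_add, Nat.mod_eq_of_lt (show 2 < k + 4 by omega),
    Nat.mod_eq_of_lt (show 3 < k + 4 by omega)]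

theorem Fin.add_two_ne_self {k : ℕ} (u : Fin (k + 4)) : u + 2 ≠ u := by
  simp [Fin.ext_iff, Nat.mod_eq_of_lt (show 2 < k + 4 by omega)]

namespace IsInducedCycle

variable {α : Type*} {G : SimpleGraph α} {ℓ : ℕ} {C : Set α}

theorem exists_embedding_range_eq (hC : IsInducedCycle G ℓ C) :
    ∃ f : cycleGraph ℓ ↪g G, Set.range f = C := by
  obtain ⟨-, ⟨e⟩⟩ := hC
  refine ⟨(Embedding.induce C).comp e.symm.toEmbedding, ?_⟩
  change Set.range (Subtype.val ∘ e.symm) = C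
  rw [e.symm.surjective.range_comp, Subtype.range_coe]

theorem exists_ne_not_adj (hC : IsInducedCycle G ℓ C) (hℓ : 4 ≤ ℓ) {x : α} (hx : x ∈ C) :
    ∃ y ∈ C, y ≠ x ∧ ¬ G.Adj x y := by
  obtain ⟨k, rfl⟩ := Nat.exists_eq_add_of_le' hℓ
  obtain ⟨f, rfl⟩ := hC.exists_embedding_range_eq
  obtain ⟨u, rfl⟩ := hx
  exact ⟨f (u + 2), ⟨_, rfl⟩, f.injective.ne (Fin.add_two_ne_self u),
    f.map_adj_iff.not.mpr (cycleGraph_not_adj_add_two u)⟩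

theorem not_isClique_neighborSet_inter (hC : IsInducedCycle G ℓ C) (hℓ : 4 ≤ ℓ) {x : α}
    (hx : x ∈ C) : ¬ G.IsClique (G.neighborSet x ∩ C) := by
  obtain ⟨k, rfl⟩ := Nat.exists_eq_add_of_le' hℓ
  obtain ⟨f, rfl⟩ := hC.exists_embedding_range_eq
  obtain ⟨v, rfl⟩ := hx
  obtain ⟨u, rfl⟩ : ∃ u, u + 1 = v := ⟨v - 1, sub_add_cancel v 1⟩
  have hu2 : u + 2 = u + 1 + 1 := by rw [add_assoc]; congr 1
  intro hclique
  refine cycleGraph_not_adj_add_two u (f.map_adj_iff.mp (hclique ?_ ?_ ?_))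
  · exact ⟨f.map_adj_iff.mpr (cycleGraph_adj_add_one u).symm, ⟨_, rfl⟩⟩
  · exact ⟨f.map_adj_iff.mpr (hu2 ▸ cycleGraph_adj_add_one (u + 1)), ⟨_, rfl⟩⟩
  · exact f.injective.ne (Fin.add_two_ne_self u).symm

end IsInducedCycle

section Gadget

variable {n m : ℕ} {S : Fin m → Set (Fin n)} {F : Set (Fin m)}

theorem scGadget_adj_of_eq_a_or_eq_b {i : Fin n} {v w : SCVert n m}
    (hv : v = .a i ∨ v = .b i) (h : (scGadget n m S).Adj v w) : w = .g ∨ w = .c i := by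
  rcases hv with rfl | rfl <;> cases w <;> simp_all [scGadget, scRel]

theorem scGadget_adj_c {i : Fin n} {w : SCVert n m} (h : (scGadget n m S).Adj (.c i) w) :
    w = .a i ∨ w = .b i ∨ ∃ j, w = .s j := by
  cases w <;> simp_all [scGadget, scRel]

theorem scGadget_adj_s_s {j j' : Fin m} (h : j ≠ j') : (scGadget n m S).Adj (.s j) (.s j') := by
  simp [scGadget, scRel, h]

variable (n m F) in
def scGStar : {v : SCVert n m // ∀ j ∈ F, v ≠ SCVert.s j} :=
  ⟨.g, by simp⟩

theorem scContracted_adj_scGStar (hcover : ∀ i : Fin n, ∃ j ∈ F, i ∈ S j)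
    {x : {v : SCVert n m // ∀ j ∈ F, v ≠ SCVert.s j}} (hx : x ≠ scGStar n m F) :
    (scContracted n m S F).Adj (scGStar n m F) x := by
  obtain ⟨v, hv⟩ := x
  have hvg : v ≠ .g := fun h => hx (Subtype.ext h)
  refine (fromRel_adj _ _ _).mpr ⟨hx.symm, Or.inl ?_⟩
  simp only [scGStar, if_true]
  cases v with
  | c i =>
    obtain ⟨j, hjF, hij⟩ := hcover i
    exact Or.inr ⟨j, hjF, by simp [scGadget, scRel, hij]⟩
  | g => exact absurd rfl hvg
  | _ => exact Or.inl (by simp [scGadget, scRel])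

theorem scContracted_adj_iff_scGadget_adj {x y : {v : SCVert n m // ∀ j ∈ F, v ≠ SCVert.s j}}
    (hx : x ≠ scGStar n m F) (hy : y ≠ scGStar n m F) :
    (scContracted n m S F).Adj x y ↔ (scGadget n m S).Adj x.val y.val := by
  have hxg : x.val ≠ .g := fun h => hx (Subtype.ext h)
  have hyg : y.val ≠ .g := fun h => hy (Subtype.ext h)
  simp only [scContracted, fromRel_adj, hxg, hyg, if_false, ne_eq, ← Subtype.val_inj]
  exact ⟨fun h => h.2.elim id (fun h' => h'.symm), fun h => ⟨h.ne, Or.inl h⟩⟩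

theorem scContracted_isClique_s :
    (scContracted n m S F).IsClique {x | ∃ j, x.val = SCVert.s j} := by
  rintro x ⟨j, hj⟩ y ⟨j', hj'⟩ hxy
  have hne : ∀ {z : {v : SCVert n m // ∀ j ∈ F, v ≠ SCVert.s j}} {j},
      z.val = .s j → z ≠ scGStar n m F := fun hz h => by simp [h, scGStar] at hz
  rw [scContracted_adj_iff_scGadget_adj (hne hj) (hne hj'), hj, hj']
  exact scGadget_adj_s_s fun h => hxy (Subtype.ext (by rw [hj, hj', h]))

variable {ℓ : ℕ} {C : Set {v : SCVert n m // ∀ j ∈ F, v ≠ SCVert.s j}}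

theorem scGStar_notMem (hcover : ∀ i : Fin n, ∃ j ∈ F, i ∈ S j)
    (hC : IsInducedCycle (scContracted n m S F) ℓ C) (hℓ : 4 ≤ ℓ) : scGStar n m F ∉ C :=
  fun hg => by
    obtain ⟨y, -, hyg, hy⟩ := hC.exists_ne_not_adj hℓ hg
    exact hy (scContracted_adj_scGStar hcover hyg)

theorem notMem_of_val_eq_a_or_eq_b (hC : IsInducedCycle (scContracted n m S F) ℓ C)
    (hℓ : 4 ≤ ℓ) (hg : scGStar n m F ∉ C) {i : Fin n}
    {x : {v : SCVert n m // ∀ j ∈ F, v ≠ SCVert.s j}} (hx : x.val = .a i ∨ x.val = .b i) :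
    x ∉ C := fun hxC => by
  refine hC.not_isClique_neighborSet_inter hℓ hxC (IsClique.of_subsingleton ?_)
  refine Set.Subsingleton.anti (t := {y | y.val = .c i})
    (fun y hy z hz => Subtype.ext (hy.trans hz.symm)) ?_
  rintro y ⟨hxy, hyC⟩
  have hyg := ne_of_mem_of_not_mem hyC hg
  rw [mem_neighborSet, scContracted_adj_iff_scGadget_adj (ne_of_mem_of_not_mem hxC hg) hyg] at hxy
  exact (scGadget_adj_of_eq_a_or_eq_b hx hxy).resolve_left fun h => hyg (Subtype.ext h)

theorem notMem_of_val_eq_c (hC : IsInducedCycle (scContracted n m S F) ℓ C)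
    (hℓ : 4 ≤ ℓ) (hg : scGStar n m F ∉ C) (hab : ∀ y ∈ C, ∀ i, y.val ≠ .a i ∧ y.val ≠ .b i)
    {i : Fin n} {x : {v : SCVert n m // ∀ j ∈ F, v ≠ SCVert.s j}} (hx : x.val = .c i) :
    x ∉ C := fun hxC => by
  refine hC.not_isClique_neighborSet_inter hℓ hxC (scContracted_isClique_s.subset ?_)
  rintro y ⟨hxy, hyC⟩
  rw [mem_neighborSet, scContracted_adj_iff_scGadget_adj (ne_of_mem_of_not_mem hxC hg)
    (ne_of_mem_of_not_mem hyC hg), hx] at hxy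
  obtain h | h | h := scGadget_adj_c hxy
  · exact absurd h (hab y hyC i).1
  · exact absurd h (hab y hyC i).2
  · exact h

end Gadget

/-- If `F` indexes a set cover, then contracting the edges `g s_j`, `j ∈ F`, of the
set-cover gadget graph yields a chordal graph (no induced cycle on ≥ 4 vertices). -/
theorem stmt_13 (n m : ℕ) (S : Fin m → Set (Fin n)) (F : Set (Fin m))
    (hcover : ∀ i : Fin n, ∃ j ∈ F, i ∈ S j) :
    ∀ ℓ : ℕ, 4 ≤ ℓ →
      ∀ C : Set {v : SCVert n m // ∀ j ∈ F, v ≠ SCVert.s j},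
        ¬ IsInducedCycle (scContracted n m S F) ℓ C := by
  intro ℓ hℓ C hC
  have hg := scGStar_notMem hcover hC hℓ
  have hab : ∀ x ∈ C, ∀ i, x.val ≠ .a i ∧ x.val ≠ .b i := fun x hx i =>
    ⟨fun h => notMem_of_val_eq_a_or_eq_b hC hℓ hg (.inl h) hx,
      fun h => notMem_of_val_eq_a_or_eq_b hC hℓ hg (.inr h) hx⟩
  have hs : C ⊆ {x | ∃ j, x.val = .s j} := by
    intro x hx
    cases hv : x.val with
    | s j => exact ⟨j, hv⟩
    | a i => exact absurd hv (hab x hx i).1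
    | b i => exact absurd hv (hab x hx i).2
    | c i => exact absurd hx (notMem_of_val_eq_c hC hℓ hg hab hv)
    | g => exact absurd (Subtype.ext hv : x = scGStar n m F) (ne_of_mem_of_not_mem hx hg)
  obtain ⟨x, hx⟩ := Set.nonempty_of_ncard_ne_zero (hC.1.trans_ne (by omega))
  exact hC.not_isClique_neighborSet_inter hℓ hx
    (scContracted_isClique_s.subset (Set.inter_subset_right.trans hs))
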